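/- In the category of frames, a frame homomorphism is an extremal epimorphism if and only if it is surjective. -/

import Mathlib

/-!
A mono `m` of frames is injective: its kernel pair `{(a, b) | m a = m b}` is a subframe of the
product, and the two projections out of it are equalized by `m`. A frame hom `f` factors through
the subframe `range f` via the injective inclusion, so if `f` is an extremal epi this inclusion is
an isomorphism and `f` is onto. Conversely a surjection is epi, and if it factors as `h ≫ m`
with `m` mono then `m` is bijective, hence an isomorphism.
-/

open CategoryTheory

universe u

structure Subframe (X : Type*) [Order.Frame X] where
  carrier : Set X
  inf_mem' {a b : X} : a ∈ carrier → b ∈ carrier → a ⊓ b ∈ carrier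
  top_mem' : ⊤ ∈ carrier
  sSup_mem' {s : Set X} : s ⊆ carrier → sSup s ∈ carrier

namespace Subframe

variable {X : Type*} [Order.Frame X] (S : Subframe X)

instance : SetLike (Subframe X) X where
  coe := carrier
  coe_injective S T h := by cases S; cases T; congr

instance : SupSet S where
  sSup s := ⟨sSup (Subtype.val '' s), S.sSup_mem' (by rintro _ ⟨a, -, rfl⟩; exact a.2)⟩

instance : CompleteLattice S where
  inf a b := ⟨a ⊓ b, S.inf_mem' a.2 b.2⟩
  inf_le_left _ _ := inf_le_left (α := X)
  inf_le_right _ _ := inf_le_right (α := X)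
  le_inf _ _ _ := le_inf (α := X)
  top := ⟨⊤, S.top_mem'⟩
  le_top _ := le_top (α := X)
  __ := completeLatticeOfSup S fun s =>
    ⟨fun a ha => le_sSup (α := X) (Set.mem_image_of_mem _ ha),
      fun b hb => sSup_le (α := X) (by rintro _ ⟨a, ha, rfl⟩; exact hb ha)⟩

lemma coe_inf (a b : S) : ((a ⊓ b : S) : X) = (a : X) ⊓ b := rfl

lemma coe_sSup (s : Set S) : ((sSup s : S) : X) = sSup (Subtype.val '' s) := rfl

instance : Order.Frame S := .ofMinimalAxioms
  { inf_sSup_le_iSup_inf :=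
      (Function.frameMinimalAxioms .of Subtype.val Subtype.coe_le_coe S.coe_inf
        fun s => by rw [coe_sSup, sSup_image]).inf_sSup_le_iSup_inf }

def subtype : FrameHom S X where
  toFun := Subtype.val
  map_inf' := S.coe_inf
  map_top' := rfl
  map_sSup' := S.coe_sSup

end Subframe

namespace FrameHom

variable {X Y : Type*} [Order.Frame X] [Order.Frame Y]

def fst : FrameHom (X × Y) X where
  toFun := Prod.fst
  map_inf' _ _ := rfl
  map_top' := rfl
  map_sSup' := Prod.fst_sSup

def snd : FrameHom (X × Y) Y where
  toFun := Prod.snd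
  map_inf' _ _ := rfl
  map_top' := rfl
  map_sSup' := Prod.snd_sSup

variable (f : FrameHom X Y)

def range : Subframe Y where
  carrier := Set.range f
  inf_mem' := by
    rintro _ _ ⟨a, rfl⟩ ⟨b, rfl⟩
    exact ⟨a ⊓ b, map_inf f a b⟩
  top_mem' := ⟨⊤, map_top f⟩
  sSup_mem' {s} hs := ⟨sSup (f ⁻¹' s), by rw [map_sSup, Set.image_preimage_eq_of_subset hs]⟩

def rangeRestrict : FrameHom X f.range where
  toFun a := ⟨f a, a, rfl⟩
  map_inf' a b := Subtype.ext (map_inf f a b)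
  map_top' := Subtype.ext (map_top f)
  map_sSup' s := Subtype.ext <| by
    rw [Subframe.coe_sSup, Set.image_image]
    exact map_sSup f s

def kerPair : Subframe (X × X) where
  carrier := {p | f p.1 = f p.2}
  inf_mem' {p q} hp hq :=
    (map_inf f _ _).trans <| (congrArg₂ (· ⊓ ·) hp hq).trans (map_inf f _ _).symm
  top_mem' := rfl
  sSup_mem' {s} hs := by
    change f (sSup s).1 = f (sSup s).2
    rw [Prod.fst_sSup, Prod.snd_sSup, map_sSup, map_sSup, Set.image_image, Set.image_image]
    exact congrArg sSup (Set.image_congr fun p hp => hs hp)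

end FrameHom

namespace Frm

instance forget_reflectsIsomorphisms : (forget Frm.{u}).ReflectsIsomorphisms where
  reflects {X Y} f _ := by
    have hf := (isIso_iff_bijective ((forget Frm).map f)).1 ‹_›
    exact (Iso.mk (RelIso.ofSurjective (orderEmbeddingOfInjective f.hom hf.1) hf.2)).isIso_hom

theorem injective_of_mono {N Y : Frm.{u}} (m : N ⟶ Y) [Mono m] : Function.Injective m := by
  intro a b hab
  let K := m.hom.kerPair
  have hproj :
      ofHom (FrameHom.fst.comp K.subtype) ≫ m = ofHom (FrameHom.snd.comp K.subtype) ≫ m :=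
    ext fun p => p.2
  exact congr($((cancel_mono m).1 hproj) ⟨(a, b), hab⟩)

end Frm

/-- In the category `Frm` of frames, a frame homomorphism is an extremal epimorphism
(an epimorphism such that whenever it factors as `m ∘ h` with `m` monic, `m` is an
isomorphism) if and only if it is surjective. -/
theorem extremalEpi_iff_surjective {X Y : Frm} (f : X ⟶ Y) :
    (Epi f ∧ ∀ (N : Frm) (h : X ⟶ N) (m : N ⟶ Y), Mono m → f = h ≫ m → IsIso m) ↔
      Function.Surjective (show FrameHom X Y from f.hom) := by
  constructor
  · rintro ⟨-, hextremal⟩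
    let incl : Frm.of f.hom.range ⟶ Y := Frm.ofHom f.hom.range.subtype
    have hiso : IsIso incl := hextremal _ (Frm.ofHom f.hom.rangeRestrict) incl
      (ConcreteCategory.mono_of_injective _ Subtype.val_injective) rfl
    intro y
    obtain ⟨⟨_, x, rfl⟩, rfl⟩ := ((ConcreteCategory.isIso_iff_bijective incl).1 hiso).2 y
    exact ⟨x, rfl⟩
  · intro hf
    refine ⟨ConcreteCategory.epi_of_surjective f hf, fun N h m _ hfac => ?_⟩
    have hsurj : Function.Surjective m := by
      subst hfac
      exact Function.Surjective.of_comp hf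
    exact (ConcreteCategory.isIso_iff_bijective m).2 ⟨Frm.injective_of_mono m, hsurj⟩
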